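/- arXiv:2107.02439 — 4 statements merged into one kernel-verified Lean document; each statement's English description precedes it below -/
import Mathlib

section
/- Let f, f_0 : ℝ → ℝ be Hölder continuous with constants L and L_0 respectively and exponent β ∈ (0,1]. Let B be a finite union of disjoint intervals B_j = [x_j − h, x_j + h], j = 1,…,N. Set p(j) = ∫_{B_j} f and p_0(j) = ∫_{B_j} f_0. Then |∫_B (f − f_0)² dx − (1/(2h)) Σ_j (p(j) − p_0(j))²| ≤ 4(L + L_0)² |B| h^{2β}, where |B| = 2Nh. -/
/-! On a cell `B` write `g = f - f0` and let `m` be the mean of `g` over `B`. The cell's error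
`∫_B g² - (∫_B g)² / |B|` is the variance term `∫_B (g - m)²`, and since `m` is an average of
values of `g` on `B`, `|g - m|` is at most the oscillation of `g` on `B`. Hölder continuity bounds
that oscillation by `(L + L0) (2h)^β ≤ 2 (L + L0) h^β`, and summing over the disjoint cells gives
the claim. -/

open MeasureTheory Filter Topology

section SetVariance

variable {α : Type*} [MeasurableSpace α] {μ : Measure α} {s : Set α} {g : α → ℝ}

theorem setIntegral_sq_sub_setAverage (hs : μ s ≠ ⊤) (hg : IntegrableOn g s μ)
    (hg2 : IntegrableOn (fun x => g x ^ 2) s μ) :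
    ∫ x in s, (g x - ⨍ y in s, g y ∂μ) ^ 2 ∂μ =
      ∫ x in s, g x ^ 2 ∂μ - (μ.real s)⁻¹ * (∫ x in s, g x ∂μ) ^ 2 := by
  set a := ⨍ y in s, g y ∂μ
  have expand : (fun x => (g x - a) ^ 2) = fun x => g x ^ 2 - 2 * a * g x + a ^ 2 := by
    ext x; ring
  have hlin : IntegrableOn (fun x => 2 * a * g x) s μ := hg.const_mul _
  have hquad : IntegrableOn (fun x => g x ^ 2 - 2 * a * g x) s μ := hg2.sub hlin
  rw [expand, integral_add hquad (integrableOn_const hs), integral_sub hg2 hlin,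
    integral_const_mul, setIntegral_const, smul_eq_mul,
    show a = (μ.real s)⁻¹ * ∫ x in s, g x ∂μ from setAverage_eq μ g s]
  rcases eq_or_ne (μ.real s) 0 with h0 | h0
  · simp [h0]
  · field_simp
    ring

theorem abs_sub_setAverage_le (hs : MeasurableSet s) (h0 : μ s ≠ 0) (hT : μ s ≠ ⊤)
    (hg : IntegrableOn g s μ) {C : ℝ} (hC : ∀ y ∈ s, ∀ z ∈ s, |g y - g z| ≤ C) {y : α}
    (hy : y ∈ s) : |g y - ⨍ z in s, g z ∂μ| ≤ C := by
  have : ⨍ z in s, g z ∂μ ∈ Metric.closedBall (g y) C :=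
    (convex_closedBall _ _).set_average_mem Metric.isClosed_closedBall h0 hT
      ((ae_restrict_iff' hs).2 (Eventually.of_forall fun z hz => by
        rw [Metric.mem_closedBall, Real.dist_eq, abs_sub_comm]; exact hC y hy z hz)) hg
  rwa [Metric.mem_closedBall, Real.dist_eq, abs_sub_comm] at this

theorem abs_setIntegral_sq_sub_le (hs : MeasurableSet s) (h0 : μ s ≠ 0) (hT : μ s ≠ ⊤)
    (hg : IntegrableOn g s μ) (hg2 : IntegrableOn (fun x => g x ^ 2) s μ) {C : ℝ}
    (hC : ∀ y ∈ s, ∀ z ∈ s, |g y - g z| ≤ C) :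
    |∫ x in s, g x ^ 2 ∂μ - (μ.real s)⁻¹ * (∫ x in s, g x ∂μ) ^ 2| ≤ C ^ 2 * μ.real s := by
  rw [← setIntegral_sq_sub_setAverage hT hg hg2, ← Real.norm_eq_abs]
  refine norm_setIntegral_le_of_norm_le_const hT.lt_top fun y hy => ?_
  rw [Real.norm_eq_abs, abs_sq, ← sq_abs]
  exact pow_le_pow_left₀ (abs_nonneg _) (abs_sub_setAverage_le hs h0 hT hg hC hy) 2

end SetVariance

section Holder

variable {f f₀ : ℝ → ℝ} {L L₀ β : ℝ}

theorem nonneg_of_abs_sub_le_mul_rpow (hf : ∀ a b, |f a - f b| ≤ L * |a - b| ^ β) : 0 ≤ L := by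
  simpa using (abs_nonneg _).trans (hf 1 0)

theorem continuous_of_abs_sub_le_mul_rpow (hβ : 0 < β)
    (hf : ∀ a b, |f a - f b| ≤ L * |a - b| ^ β) : Continuous f := by
  refine continuous_iff_continuousAt.2 fun a => tendsto_iff_dist_tendsto_zero.2 ?_
  have hlim : Tendsto (fun b => L * |b - a| ^ β) (𝓝 a) (𝓝 0) := by
    have : Continuous fun b => L * |b - a| ^ β := by fun_prop (disch := exact hβ.le)
    simpa [Real.zero_rpow hβ.ne'] using this.tendsto a
  exact squeeze_zero (fun _ => dist_nonneg) (fun b => hf b a) hlim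

theorem abs_sub_sub_le_mul_rpow (hf : ∀ a b, |f a - f b| ≤ L * |a - b| ^ β)
    (hf₀ : ∀ a b, |f₀ a - f₀ b| ≤ L₀ * |a - b| ^ β) (a b : ℝ) :
    |(f a - f₀ a) - (f b - f₀ b)| ≤ (L + L₀) * |a - b| ^ β :=
  calc |(f a - f₀ a) - (f b - f₀ b)| = |(f a - f b) - (f₀ a - f₀ b)| := by ring_nf
    _ ≤ |f a - f b| + |f₀ a - f₀ b| := abs_sub _ _
    _ ≤ (L + L₀) * |a - b| ^ β := by linarith [hf a b, hf₀ a b]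

theorem abs_sub_le_two_mul_rpow_of_mem_Icc (hβ0 : 0 ≤ β) (hβ1 : β ≤ 1)
    (hf : ∀ a b, |f a - f b| ≤ L * |a - b| ^ β) {c h : ℝ} (hh : 0 ≤ h) {y z : ℝ}
    (hy : y ∈ Set.Icc (c - h) (c + h)) (hz : z ∈ Set.Icc (c - h) (c + h)) :
    |f y - f z| ≤ 2 * L * h ^ β := by
  have hyz : |y - z| ≤ 2 * h := abs_le.2 ⟨by linarith [hy.1, hz.2], by linarith [hy.2, hz.1]⟩
  have h2 : (2 : ℝ) ^ β ≤ 2 := by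
    simpa using Real.rpow_le_rpow_of_exponent_le one_le_two hβ1
  have hL := nonneg_of_abs_sub_le_mul_rpow hf
  calc |f y - f z| ≤ L * (2 * h) ^ β := (hf y z).trans (by gcongr)
    _ = L * 2 ^ β * h ^ β := by rw [Real.mul_rpow zero_le_two hh]; ring
    _ ≤ 2 * L * h ^ β := by rw [mul_comm 2 L]; gcongr

end Holder

theorem l2_discretization_bound (N : ℕ) (f f0 : ℝ → ℝ) (L L0 β : ℝ)
    (hβ0 : 0 < β) (hβ1 : β ≤ 1)
    (hf : ∀ a b : ℝ, |f a - f b| ≤ L * |a - b| ^ β)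
    (hf0 : ∀ a b : ℝ, |f0 a - f0 b| ≤ L0 * |a - b| ^ β)
    (h : ℝ) (hh : 0 < h) (x : Fin N → ℝ)
    (hdisj : ∀ i j, i ≠ j →
      Disjoint (Set.Icc (x i - h) (x i + h)) (Set.Icc (x j - h) (x j + h))) :
    |(∫ y in ⋃ j, Set.Icc (x j - h) (x j + h), (f y - f0 y) ^ 2) -
        (1 / (2 * h)) * ∑ j : Fin N,
          ((∫ y in Set.Icc (x j - h) (x j + h), f y) -
           (∫ y in Set.Icc (x j - h) (x j + h), f0 y)) ^ 2|
      ≤ 4 * (L + L0) ^ 2 * (2 * N * h) * h ^ (2 * β) := by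
  have hfc := continuous_of_abs_sub_le_mul_rpow hβ0 hf
  have hf0c := continuous_of_abs_sub_le_mul_rpow hβ0 hf0
  have hsq : Continuous fun y => (f y - f0 y) ^ 2 := by fun_prop
  have hvol : ∀ c, volume.real (Set.Icc (c - h) (c + h)) = 2 * h := fun c => by
    rw [Real.volume_real_Icc_of_le (by linarith)]; ring
  have hcell : ∀ j, |(∫ y in Set.Icc (x j - h) (x j + h), (f y - f0 y) ^ 2) -
      (1 / (2 * h)) * ((∫ y in Set.Icc (x j - h) (x j + h), f y) -
        (∫ y in Set.Icc (x j - h) (x j + h), f0 y)) ^ 2|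
      ≤ (2 * (L + L0) * h ^ β) ^ 2 * (2 * h) := fun j => by
    rw [← integral_sub hfc.integrableOn_Icc hf0c.integrableOn_Icc, one_div, ← hvol (x j)]
    refine abs_setIntegral_sq_sub_le measurableSet_Icc ?_ measure_Icc_lt_top.ne
      (hfc.sub hf0c).integrableOn_Icc hsq.integrableOn_Icc
      fun y hy z hz => abs_sub_le_two_mul_rpow_of_mem_Icc hβ0.le hβ1
        (abs_sub_sub_le_mul_rpow hf hf0) hh.le hy hz
    simp [Real.volume_Icc, hh]
  rw [integral_iUnion_fintype (fun _ => measurableSet_Icc) hdisj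
    fun _ => hsq.integrableOn_Icc, Finset.mul_sum, ← Finset.sum_sub_distrib]
  calc _ ≤ ∑ j, (2 * (L + L0) * h ^ β) ^ 2 * (2 * h) :=
        (Finset.abs_sum_le_sum_abs _ _).trans (Finset.sum_le_sum fun j _ => hcell j)
    _ = 4 * (L + L0) ^ 2 * (2 * N * h) * (h ^ β) ^ 2 := by
        simp only [Finset.sum_const, Finset.card_univ, Fintype.card_fin, nsmul_eq_mul]; ring
    _ = 4 * (L + L0) ^ 2 * (2 * N * h) * h ^ (2 * β) := by
        rw [mul_comm 2 β, Real.rpow_mul hh.le, Real.rpow_two]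
end

section
/- Let a_1, …, a_N ≥ 0 and τ > 0. Then Σ_j a_j · min(a_j, τ) ≥ min( Σ_j a_j², τ · sqrt(Σ_j a_j²) ). -/
/-
With `s = √(∑ a_j²)`, every term satisfies `a_j · min(a_j, τ) ≥ min(1, τ/s) · a_j²`: if `a_j ≤ τ`
the term is `a_j²`, and otherwise it is `τ a_j = (τ/a_j) a_j² ≥ (τ/s) a_j²` because `a_j ≤ s`.
Summing gives `min(1, τ/s) · s² = min(s², τ s)`.
-/

open Finset

lemma min_one_div_mul_sq_le_mul_min {x τ r : ℝ} (hτ : 0 ≤ τ) (hxr : |x| ≤ r) :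
    min 1 (τ / r) * x ^ 2 ≤ x * min x τ := by
  rcases le_or_gt x τ with hle | hlt
  · rw [min_eq_left hle, ← sq]
    exact mul_le_of_le_one_left (sq_nonneg x) (min_le_left _ _)
  · have hx : 0 < x := hτ.trans_lt hlt
    have hxr' : x ≤ r := (le_abs_self x).trans hxr
    calc min 1 (τ / r) * x ^ 2 ≤ τ / x * x ^ 2 := by
          gcongr
          exact (min_le_right _ _).trans (div_le_div_of_nonneg_left hτ hx hxr')
      _ = x * min x τ := by
          rw [min_eq_right hlt.le]
          field_simp

lemma min_one_div_sqrt_mul_self {S : ℝ} (hS : 0 ≤ S) (τ : ℝ) :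
    min 1 (τ / √S) * S = min S (τ * √S) := by
  rw [min_mul_of_nonneg _ _ hS, one_mul, div_mul_eq_mul_div, mul_div_assoc, Real.div_sqrt]

lemma abs_le_sqrt_sum_sq {ι : Type*} {s : Finset ι} {a : ι → ℝ} {i : ι} (hi : i ∈ s) :
    |a i| ≤ √(∑ j ∈ s, a j ^ 2) :=
  Real.abs_le_sqrt (single_le_sum (fun j _ => sq_nonneg (a j)) hi)

theorem Finset.min_sum_sq_le_sum_mul_min {ι : Type*} (s : Finset ι) (a : ι → ℝ) {τ : ℝ}
    (hτ : 0 ≤ τ) :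
    min (∑ j ∈ s, a j ^ 2) (τ * √(∑ j ∈ s, a j ^ 2)) ≤ ∑ j ∈ s, a j * min (a j) τ := by
  rw [← min_one_div_sqrt_mul_self (sum_nonneg fun j _ => sq_nonneg (a j)), mul_sum]
  exact sum_le_sum fun j hj => min_one_div_mul_sq_le_mul_min hτ (abs_le_sqrt_sum_sq hj)

theorem truncated_sum_lower_bound_general (N : ℕ) (a : Fin N → ℝ)
    (τ : ℝ) (hτ : 0 < τ) :
    min (∑ j, (a j) ^ 2) (τ * Real.sqrt (∑ j, (a j) ^ 2))
      ≤ ∑ j, a j * min (a j) τ :=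
  univ.min_sum_sq_le_sum_mul_min a hτ.le

theorem truncated_sum_lower_bound (N : ℕ) (a : Fin N → ℝ) (ha : ∀ j, 0 ≤ a j)
    (τ : ℝ) (hτ : 0 < τ) :
    min (∑ j, (a j) ^ 2) (τ * Real.sqrt (∑ j, (a j) ^ 2))
      ≤ ∑ j, a j * min (a j) τ :=
  truncated_sum_lower_bound_general N a τ hτ
end

section
/- Let f_0 : [0,∞) → [0,∞) be of the form f_0(x) = ℓ(x)/(1+x) with ℓ nonnegative, and suppose there exist c ∈ (0,1) and t > 1 such that ℓ(t x) ≤ c ℓ(x) for all x ≥ 1. Then for all a ≥ 1, ∫_{ta}^∞ f_0 ≤ c (1 + (t−1)/(1+ta)) ∫_a^∞ f_0 (assuming these integrals are finite). -/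
/-!
Substituting `x = t u` turns `∫_{ta}^∞ ℓ(x)/(1+x) dx` into `∫_a^∞ t ℓ(tu)/(1+tu) du`. On `u ≥ a ≥ 1`
the integrand is at most `c ℓ(u) · t/(1+tu)`, and `t(1+u)/(1+tu) = 1 + (t-1)/(1+tu)` is largest at
`u = a`, so it is at most `c (1 + (t-1)/(1+ta)) ℓ(u)/(1+u)`.
-/

open MeasureTheory Set

lemma mul_one_add_div_one_add_mul_le {t a x : ℝ} (ht : 1 ≤ t) (ha : 0 ≤ a) (hax : a ≤ x) :
    t * (1 + x) / (1 + t * x) ≤ 1 + (t - 1) / (1 + t * a) := by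
  have hta : 0 < 1 + t * a := by positivity
  have htx : 0 < 1 + t * x := by nlinarith
  have hrw : t * (1 + x) / (1 + t * x) = 1 + (t - 1) / (1 + t * x) := by
    field_simp
    ring
  rw [hrw]
  gcongr

lemma setIntegral_Ioi_mul_le {g : ℝ → ℝ} {a t C : ℝ} (ht : 0 < t)
    (hg : IntegrableOn g (Ioi a)) (hgt : IntegrableOn g (Ioi (t * a)))
    (hle : ∀ x ∈ Ioi a, t * g (t * x) ≤ C * g x) :
    ∫ x in Ioi (t * a), g x ≤ C * ∫ x in Ioi a, g x := by
  have hcomp : IntegrableOn (fun x => g (t * x)) (Ioi a) :=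
    (integrableOn_Ioi_comp_mul_left_iff g a ht).mpr hgt
  calc ∫ x in Ioi (t * a), g x = ∫ x in Ioi a, t * g (t * x) := by
        rw [integral_const_mul, integral_comp_mul_left_Ioi g a ht, smul_eq_mul, ← mul_assoc,
          mul_inv_cancel₀ ht.ne', one_mul]
    _ ≤ ∫ x in Ioi a, C * g x :=
        setIntegral_mono_on (hcomp.const_mul t) (hg.const_mul C) measurableSet_Ioi hle
    _ = C * ∫ x in Ioi a, g x := integral_const_mul C _

theorem tail_integral_bound_general (ℓ : ℝ → ℝ) (hnn : ∀ x, 0 ≤ ℓ x)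
    (c t : ℝ) (ht : 1 < t)
    (hdec : ∀ x, 1 ≤ x → ℓ (t * x) ≤ c * ℓ x)
    (a : ℝ) (ha : 1 ≤ a)
    (hint : IntegrableOn (fun x => ℓ x / (1 + x)) (Set.Ici a)) :
    (∫ x in Set.Ici (t * a), ℓ x / (1 + x))
      ≤ c * (1 + (t - 1) / (1 + t * a)) * ∫ x in Set.Ici a, ℓ x / (1 + x) := by
  have hta : a ≤ t * a := by nlinarith
  have hpt : ∀ x ∈ Ioi a, t * (ℓ (t * x) / (1 + t * x))
      ≤ c * (1 + (t - 1) / (1 + t * a)) * (ℓ x / (1 + x)) := by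
    intro x hx
    have hx1 : 1 ≤ x := ha.trans (hx.le)
    have hcℓ : 0 ≤ c * ℓ x := (hnn _).trans (hdec x hx1)
    have hK := mul_one_add_div_one_add_mul_le ht.le (by linarith) (hx.le)
    calc t * (ℓ (t * x) / (1 + t * x)) ≤ t * (c * ℓ x / (1 + t * x)) := by
          gcongr
          exact hdec x hx1
      _ = c * ℓ x * (t * (1 + x) / (1 + t * x)) / (1 + x) := by
          field_simp
      _ ≤ c * ℓ x * (1 + (t - 1) / (1 + t * a)) / (1 + x) := by gcongr
      _ = c * (1 + (t - 1) / (1 + t * a)) * (ℓ x / (1 + x)) := by ring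
  rw [integral_Ici_eq_integral_Ioi, integral_Ici_eq_integral_Ioi]
  exact setIntegral_Ioi_mul_le (by linarith) (hint.mono_set Ioi_subset_Ici_self)
    (hint.mono_set (Ioi_subset_Ici_self.trans (Ici_subset_Ici.mpr hta))) hpt

theorem tail_integral_bound (ℓ : ℝ → ℝ) (hm : Measurable ℓ) (hnn : ∀ x, 0 ≤ ℓ x)
    (c t : ℝ) (hc0 : 0 < c) (hc1 : c < 1) (ht : 1 < t)
    (hdec : ∀ x, 1 ≤ x → ℓ (t * x) ≤ c * ℓ x)
    (a : ℝ) (ha : 1 ≤ a)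
    (hint : IntegrableOn (fun x => ℓ x / (1 + x)) (Set.Ici a)) :
    (∫ x in Set.Ici (t * a), ℓ x / (1 + x))
      ≤ c * (1 + (t - 1) / (1 + t * a)) * ∫ x in Set.Ici a, ℓ x / (1 + x) :=
  tail_integral_bound_general ℓ hnn c t ht hdec a ha hint
end

section
/- Let f_0 ∈ H(β, L_0) and ψ ∈ H(β, L) with support in [−1,1], where 0 < β ≤ 1 and 0 < L_0 < L. Let (B_j)_{j=1..N} be disjoint intervals B_j = [x_j − h, x_j + h], ψ_j(t) = h^{−1/2} ψ((t − x_j)/h), and δ ≤ (h^{β+1/2}/2)(1 − L_0/L). Then for every ν ∈ {−1,1}^N, the function f_ν = f_0 + δ Σ_j ν_j ψ_j belongs to H(β, L), i.e. |f_ν(x) − f_ν(y)| ≤ L|x − y|^β for all x, y ∈ ℝ. -/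
/-!
Each rescaled bump `ψ_j` is `β`-Hölder with constant `L / h^(β+1/2)`, and since the `B_j` are
disjoint, at most two of the differences `ψ_j(a) - ψ_j(b)` are nonzero (the one with `a ∈ B_j`
and the one with `b ∈ B_j`). Hence the perturbation contributes at most
`2 δ L h^(-β-1/2) |a - b|^β ≤ (L - L₀) |a - b|^β`, which is exactly the room left by `f₀`.
-/

open Finset Function

theorem card_filter_mem_le_one {ι α : Type*} [Fintype ι] {S : ι → Set α}
    (hS : Pairwise (Disjoint on S)) (t : α) [DecidablePred fun i => t ∈ S i] :
    #{i | t ∈ S i} ≤ 1 :=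
  card_le_one.2 fun i hi j hj => by
    by_contra hij
    exact Set.disjoint_left.1 (hS hij) (mem_filter.1 hi).2 (mem_filter.1 hj).2

theorem abs_sum_sub_sum_le_two_mul {ι α : Type*} [Fintype ι] {S : ι → Set α}
    (hS : Pairwise (Disjoint on S)) {g : ι → α → ℝ} (hg : ∀ i t, t ∉ S i → g i t = 0)
    {a b : α} {C : ℝ} (hC0 : 0 ≤ C) (hC : ∀ i, |g i a - g i b| ≤ C) :
    |∑ i, g i a - ∑ i, g i b| ≤ 2 * C := by
  classical
  set s : Finset ι := univ.filter (fun i => a ∈ S i) ∪ univ.filter (fun i => b ∈ S i)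
  have hs : #s ≤ 2 :=
    (card_union_le _ _).trans (add_le_add (card_filter_mem_le_one hS a)
      (card_filter_mem_le_one hS b))
  have hsum : ∑ i, (g i a - g i b) = ∑ i ∈ s, (g i a - g i b) := by
    refine (sum_subset (subset_univ s) fun i _ hi => ?_).symm
    simp only [s, mem_union, mem_filter, mem_univ, true_and, not_or] at hi
    rw [hg i a hi.1, hg i b hi.2, sub_self]
  calc |∑ i, g i a - ∑ i, g i b| = |∑ i ∈ s, (g i a - g i b)| := by rw [← hsum, sum_sub_distrib]
    _ ≤ ∑ i ∈ s, |g i a - g i b| := abs_sum_le_sum_abs _ _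
    _ ≤ #s * C := by simpa using sum_le_card_nsmul s _ C fun i _ => hC i
    _ ≤ 2 * C := by gcongr; exact_mod_cast hs

noncomputable def rescaledBump (ψ : ℝ → ℝ) (h x₀ t : ℝ) : ℝ :=
  (Real.sqrt h)⁻¹ * ψ ((t - x₀) / h)

theorem rescaledBump_eq_zero {ψ : ℝ → ℝ} (hsupp : ∀ t, t ∉ Set.Icc (-1 : ℝ) 1 → ψ t = 0)
    {h : ℝ} (hh : 0 < h) (x₀ : ℝ) {t : ℝ} (ht : t ∉ Set.Icc (x₀ - h) (x₀ + h)) :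
    rescaledBump ψ h x₀ t = 0 := by
  refine mul_eq_zero_of_right _ (hsupp _ fun hmem => ht ?_)
  rw [Set.mem_Icc, le_div_iff₀ hh, div_le_iff₀ hh] at hmem
  constructor <;> linarith [hmem.1, hmem.2]

theorem abs_rescaledBump_sub_le {ψ : ℝ → ℝ} {L β : ℝ}
    (hψ : ∀ a b : ℝ, |ψ a - ψ b| ≤ L * |a - b| ^ β) {h : ℝ} (hh : 0 < h) (x₀ a b : ℝ) :
    |rescaledBump ψ h x₀ a - rescaledBump ψ h x₀ b| ≤ L / h ^ (β + 1 / 2) * |a - b| ^ β := by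
  have hψ' := hψ ((a - x₀) / h) ((b - x₀) / h)
  rw [← sub_div, sub_sub_sub_cancel_right, abs_div, abs_of_pos hh,
    Real.div_rpow (abs_nonneg _) hh.le] at hψ'
  have hsqrt : 0 < Real.sqrt h := Real.sqrt_pos.2 hh
  calc |rescaledBump ψ h x₀ a - rescaledBump ψ h x₀ b|
      = (Real.sqrt h)⁻¹ * |ψ ((a - x₀) / h) - ψ ((b - x₀) / h)| := by
        rw [rescaledBump, rescaledBump, ← mul_sub, abs_mul, abs_of_pos (inv_pos.2 hsqrt)]
    _ ≤ (Real.sqrt h)⁻¹ * (L * (|a - b| ^ β / h ^ β)) := by gcongr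
    _ = L / h ^ (β + 1 / 2) * |a - b| ^ β := by
        rw [Real.rpow_add hh, ← Real.sqrt_eq_rpow]
        field_simp

theorem perturbed_density_holder_general (N : ℕ) (f0 ψ : ℝ → ℝ) (L L0 β : ℝ)
    (hL0 : 0 < L0) (hLL : L0 < L)
    (hf0 : ∀ a b : ℝ, |f0 a - f0 b| ≤ L0 * |a - b| ^ β)
    (hψ : ∀ a b : ℝ, |ψ a - ψ b| ≤ L * |a - b| ^ β)
    (hsupp : ∀ t, t ∉ Set.Icc (-1 : ℝ) 1 → ψ t = 0)
    (h : ℝ) (hh : 0 < h) (x : Fin N → ℝ)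
    (hdisj : ∀ i j, i ≠ j →
      Disjoint (Set.Icc (x i - h) (x i + h)) (Set.Icc (x j - h) (x j + h)))
    (δ : ℝ) (hδ0 : 0 ≤ δ) (hδ : δ ≤ h ^ (β + 1 / 2 : ℝ) / 2 * (1 - L0 / L))
    (ν : Fin N → ℝ) (hν : ∀ j, ν j = 1 ∨ ν j = -1) :
    ∀ a b : ℝ,
      |(f0 a + δ * ∑ j, ν j * ((Real.sqrt h)⁻¹ * ψ ((a - x j) / h))) -
        (f0 b + δ * ∑ j, ν j * ((Real.sqrt h)⁻¹ * ψ ((b - x j) / h)))|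
      ≤ L * |a - b| ^ β := by
  intro a b
  set C := L / h ^ (β + 1 / 2) * |a - b| ^ β
  have hL : 0 < L := hL0.trans hLL
  have hC0 : 0 ≤ C := by positivity
  have hterm : ∀ j, |ν j * rescaledBump ψ h (x j) a - ν j * rescaledBump ψ h (x j) b| ≤ C := by
    intro j
    have hνj : |ν j| = 1 := by rcases hν j with h1 | h1 <;> simp [h1]
    rw [← mul_sub, abs_mul, hνj, one_mul]
    exact abs_rescaledBump_sub_le hψ hh (x j) a b
  have hsum := abs_sum_sub_sum_le_two_mul (S := fun j => Set.Icc (x j - h) (x j + h))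
    (g := fun j t => ν j * rescaledBump ψ h (x j) t)
    (fun i j => hdisj i j)
    (fun j t ht => by rw [rescaledBump_eq_zero hsupp hh (x j) ht, mul_zero]) hC0 hterm
  have hδC : δ * (2 * C) ≤ (L - L0) * |a - b| ^ β :=
    calc δ * (2 * C) ≤ h ^ (β + 1 / 2) / 2 * (1 - L0 / L) * (2 * C) := by gcongr
      _ = (L - L0) * |a - b| ^ β := by simp only [C]; field_simp
  calc _ = |(f0 a - f0 b) + δ * (∑ j, ν j * rescaledBump ψ h (x j) a
          - ∑ j, ν j * rescaledBump ψ h (x j) b)| := by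
        rw [mul_sub]; unfold rescaledBump; congr 1; abel
    _ ≤ L0 * |a - b| ^ β + δ * (2 * C) := by
        refine (abs_add_le _ _).trans (add_le_add (hf0 a b) ?_)
        rw [abs_mul, abs_of_nonneg hδ0]
        gcongr
    _ ≤ L * |a - b| ^ β := by linarith

theorem perturbed_density_holder (N : ℕ) (f0 ψ : ℝ → ℝ) (L L0 β : ℝ)
    (hβ0 : 0 < β) (hβ1 : β ≤ 1) (hL0 : 0 < L0) (hLL : L0 < L)
    (hf0 : ∀ a b : ℝ, |f0 a - f0 b| ≤ L0 * |a - b| ^ β)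
    (hψ : ∀ a b : ℝ, |ψ a - ψ b| ≤ L * |a - b| ^ β)
    (hsupp : ∀ t, t ∉ Set.Icc (-1 : ℝ) 1 → ψ t = 0)
    (h : ℝ) (hh : 0 < h) (x : Fin N → ℝ)
    (hdisj : ∀ i j, i ≠ j →
      Disjoint (Set.Icc (x i - h) (x i + h)) (Set.Icc (x j - h) (x j + h)))
    (δ : ℝ) (hδ0 : 0 ≤ δ) (hδ : δ ≤ h ^ (β + 1 / 2 : ℝ) / 2 * (1 - L0 / L))
    (ν : Fin N → ℝ) (hν : ∀ j, ν j = 1 ∨ ν j = -1) :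
    ∀ a b : ℝ,
      |(f0 a + δ * ∑ j, ν j * ((Real.sqrt h)⁻¹ * ψ ((a - x j) / h))) -
        (f0 b + δ * ∑ j, ν j * ((Real.sqrt h)⁻¹ * ψ ((b - x j) / h)))|
      ≤ L * |a - b| ^ β :=
  perturbed_density_holder_general N f0 ψ L L0 β hL0 hLL hf0 hψ hsupp h hh x hdisj δ hδ0 hδ ν hν
end
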